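/- The transformation S: (x,y,z,w,t,s) ↦ (x + (zw+α₁)/y, y, w/y, -zy, t, t/s) is symplectic: dx∧dy + dz∧dw is preserved (for y ≠ 0). -/

import Mathlib

noncomputable def Dv (f : ℂ × ℂ × ℂ × ℂ → ℂ) (p v : ℂ × ℂ × ℂ × ℂ) : ℂ :=
  fderiv ℂ f p v

def omega (u v : ℂ × ℂ × ℂ × ℂ) : ℂ :=
  (u.1 * v.2.1 - v.1 * u.2.1) + (u.2.2.1 * v.2.2.2 - v.2.2.1 * u.2.2.2)

noncomputable def pullback (X Y Z W : ℂ × ℂ × ℂ × ℂ → ℂ) (p u v : ℂ × ℂ × ℂ × ℂ) : ℂ :=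
  (Dv X p u * Dv Y p v - Dv X p v * Dv Y p u)
    + (Dv Z p u * Dv W p v - Dv Z p v * Dv W p u)

/-! In the coordinates `(x, y, z, w)`, with `Y = y`, the cross terms cancel:
`dX ∧ dy = dx ∧ dy + (w dz + z dw) ∧ dy / y` and
`dZ ∧ dW = dz ∧ dw - (w dz + z dw) ∧ dy / y`. -/

section Leibniz

variable {f g : ℂ × ℂ × ℂ × ℂ → ℂ} {p : ℂ × ℂ × ℂ × ℂ} (v : ℂ × ℂ × ℂ × ℂ)

theorem Dv_clm (L : ℂ × ℂ × ℂ × ℂ →L[ℂ] ℂ) : Dv L p v = L v := by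
  rw [Dv, L.fderiv]

theorem Dv_x : Dv (fun q => q.1) p v = v.1 :=
  Dv_clm v (.fst ℂ ℂ _)

theorem Dv_y : Dv (fun q => q.2.1) p v = v.2.1 :=
  Dv_clm v ((ContinuousLinearMap.fst ℂ ℂ _).comp (.snd ℂ ℂ _))

theorem Dv_z : Dv (fun q => q.2.2.1) p v = v.2.2.1 :=
  Dv_clm v ((ContinuousLinearMap.fst ℂ ℂ _).comp ((ContinuousLinearMap.snd ℂ ℂ _).comp (.snd ℂ ℂ _)))

theorem Dv_w : Dv (fun q => q.2.2.2) p v = v.2.2.2 :=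
  Dv_clm v ((ContinuousLinearMap.snd ℂ ℂ _).comp ((ContinuousLinearMap.snd ℂ ℂ _).comp (.snd ℂ ℂ _)))

theorem Dv_add (hf : DifferentiableAt ℂ f p) (hg : DifferentiableAt ℂ g p) :
    Dv (fun q => f q + g q) p v = Dv f p v + Dv g p v := by
  rw [Dv, fderiv_fun_add hf hg, add_apply, Dv, Dv]

theorem Dv_const (c : ℂ) : Dv (fun _ => c) p v = 0 := by
  rw [Dv, fderiv_const_apply, zero_apply]

theorem Dv_neg : Dv (fun q => -f q) p v = -Dv f p v := by
  rw [Dv, fderiv_fun_neg, neg_apply, Dv]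

theorem Dv_mul (hf : DifferentiableAt ℂ f p) (hg : DifferentiableAt ℂ g p) :
    Dv (fun q => f q * g q) p v = Dv f p v * g p + f p * Dv g p v := by
  rw [Dv, fderiv_fun_mul hf hg]
  simp only [add_apply, smul_apply, smul_eq_mul, Dv]
  ring

theorem Dv_inv (hg : DifferentiableAt ℂ g p) (hgp : g p ≠ 0) :
    Dv (fun q => (g q)⁻¹) p v = -Dv g p v / g p ^ 2 := by
  rw [Dv, show (fun q => (g q)⁻¹) = Inv.inv ∘ g from rfl,
    fderiv_comp p (differentiableAt_inv hgp) hg, fderiv_inv]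
  simp only [ContinuousLinearMap.comp_apply, ContinuousLinearMap.toSpanSingleton_apply,
    smul_eq_mul, Dv]
  ring

theorem Dv_div (hf : DifferentiableAt ℂ f p) (hg : DifferentiableAt ℂ g p) (hgp : g p ≠ 0) :
    Dv (fun q => f q / g q) p v = (Dv f p v * g p - f p * Dv g p v) / g p ^ 2 := by
  simp only [div_eq_mul_inv]
  rw [Dv_mul (g := fun q => (g q)⁻¹) v hf (hg.inv hgp), Dv_inv v hg hgp]
  field_simp
  ring

end Leibniz

theorem okamoto_S_symplectic_general (α₁ : ℂ) (p : ℂ × ℂ × ℂ × ℂ)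
    (hy : p.2.1 ≠ 0) :
    ∀ u v : ℂ × ℂ × ℂ × ℂ,
      pullback (fun q => q.1 + (q.2.2.1 * q.2.2.2 + α₁) / q.2.1)
        (fun q => q.2.1)
        (fun q => q.2.2.2 / q.2.1)
        (fun q => -q.2.2.1 * q.2.1) p u v = omega u v := by
  intro u v
  simp (disch := first | fun_prop | exact hy) only [pullback, omega,
    Dv_add, Dv_const, Dv_neg, Dv_mul, Dv_div, Dv_x, Dv_y, Dv_z, Dv_w]
  field_simp
  ring

/-- The map S: (x,y,z,w) ↦ (x + (zw+α₁)/y, y, w/y, -zy) is symplectic for y ≠ 0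
(and s ≠ 0, which only concerns the time variables t ↦ t, s ↦ t/s). -/
theorem okamoto_S_symplectic (α₁ s : ℂ) (p : ℂ × ℂ × ℂ × ℂ)
    (hy : p.2.1 ≠ 0) (hs : s ≠ 0) :
    ∀ u v : ℂ × ℂ × ℂ × ℂ,
      pullback (fun q => q.1 + (q.2.2.1 * q.2.2.2 + α₁) / q.2.1)
        (fun q => q.2.1)
        (fun q => q.2.2.2 / q.2.1)
        (fun q => -q.2.2.1 * q.2.1) p u v = omega u v :=
  okamoto_S_symplectic_general α₁ p hy
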